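/- Let k be a field of characteristic p > 0, and let S be a finite set of pairwise inequivalent nontrivial rank-1 valuations of k, with k_v the completion of k at v for v ∈ S. Let f(T) = T + b_1 T^p + ... + b_m T^{p^m} be a p-polynomial with coefficients in k such that m ≥ 1 and b_m ≠ 0. Suppose there exists a nontrivial rank-1 valuation w of k, inequivalent to every valuation in S, whose value group is not p-divisible (some value is not a p-th power in the value group). Then the kernel of the canonical map k/f(k) → ∏_{v∈S} k_v/f(k_v) is infinite; that is, the image in k/f(k) of the set {x ∈ k : x ∈ f(k_v) for every v ∈ S} is an infinite set. -/

import Mathlib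

/-- An absolute value (rank-1 valuation) is nonarchimedean if it satisfies the
ultrametric inequality. -/
def AbsoluteValue.IsNonarch {k : Type} [Field k] (v : AbsoluteValue k ℝ) : Prop :=
  ∀ x y : k, v (x + y) ≤ max (v x) (v y)

/-- An absolute value is nontrivial if it takes a value `≠ 1` on some nonzero element. -/
def AbsoluteValue.IsNontrivial' {k : Type} [Field k] (v : AbsoluteValue k ℝ) : Prop :=
  ∃ x : k, x ≠ 0 ∧ v x ≠ 1

/-- Two absolute values on `k` are equivalent (induce the same topology) iff one is a
positive real power of the other. -/
def AbsoluteValue.IsEquivalent {k : Type} [Field k] (v w : AbsoluteValue k ℝ) : Prop :=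
  ∃ r : ℝ, 0 < r ∧ ∀ x : k, w x = v x ^ r

/-- Evaluation of the `p`-polynomial `f(T) = T + b 1 * T^p + ⋯ + b m * T^(p^m)`,
as an additive group homomorphism of a commutative ring of characteristic `p`. -/
noncomputable def pPolyHom (k : Type) [CommRing k] (p : ℕ) [Fact p.Prime] [CharP k p]
    (m : ℕ) (b : Fin m → k) : k →+ k where
  toFun x := x + ∑ i : Fin m, b i * x ^ p ^ (i.1 + 1)
  map_zero' := by
    have h0 : ∀ i : Fin m, (0 : k) ^ p ^ (i.1 + 1) = 0 :=
      fun i => zero_pow (pow_ne_zero _ (Nat.Prime.ne_zero Fact.out))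
    simp [h0]
  map_add' x y := by
    simp only [add_pow_char_pow, mul_add, Finset.sum_add_distrib]
    ring

/-!
Let `β` be the leading coefficient of `f`. Since `f` is additive and `f(y) - y` is of order
`‖y‖^p` near `0`, for small `a` the map `y ↦ a + y - f(y)` is a contraction of a small closed
ball, so `f(K_v)` contains a ball around `0`: every `a ∈ k` that is `v`-small for all `v ∈ S`
lies in the kernel. For `w`-large values the leading term dominates: `w(f(y)) = w(β) w(y)^{p^m}`.
If `w(x)` is not a `p`-th power and `w(z) > 1`, the values of `c_t = β x z^{p(N+t)}` increase
strictly, exceed any given bound for `N` large, and are never of the form `w(β) w(y)^{p^m}`.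
Weak approximation gives `a_t ∈ k`, `v`-small for all `v ∈ S`, with `w(a_t - c_t) < w(c_t)`;
then `w(a_t - a_s) = w(c_t)` for `s < t`, so `a_t - a_s ∉ f(k)` and the classes of the `a_t`
are pairwise distinct.
-/

namespace AbsoluteValue

theorem isEquivalent_iff_isEquiv {k : Type} [Field k] {v w : AbsoluteValue k ℝ} :
    v.IsEquivalent w ↔ v.IsEquiv w := by
  rw [isEquiv_iff_exists_rpow_eq, IsEquivalent]
  simp only [funext_iff, eq_comm]

variable {k : Type*} [Field k]

theorem exists_forall_abv_sub_lt {ι : Type*} [Finite ι] {v : ι → AbsoluteValue k ℝ}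
    (hv : ∀ i, (v i).IsNontrivial) (hvv : Pairwise fun i j ↦ ¬(v i).IsEquiv (v j))
    (c : ι → k) {ε : ι → ℝ} (hε : ∀ i, 0 < ε i) :
    ∃ a : k, ∀ i, v i (a - c i) < ε i := by
  have hopen : IsOpen
      {x : (i : ι) → WithAbs (v i) | ∀ i, ‖x i - WithAbs.toAbs (v i) (c i)‖ < ε i} := by
    simp only [Set.ofPred_forall]
    exact isOpen_iInter_of_finite fun i ↦ isOpen_lt (by fun_prop) continuous_const
  exact (denseRange_algebraMap_pi hv hvv).exists_mem_open hopen
    ⟨fun i ↦ WithAbs.toAbs (v i) (c i), fun i ↦ by simpa using hε i⟩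

theorem exists_abv_sub_lt_and_forall_abv_lt {n : ℕ} {w : AbsoluteValue k ℝ}
    {v : Fin n → AbsoluteValue k ℝ} (hw : w.IsNontrivial) (hv : ∀ i, (v i).IsNontrivial)
    (hwv : ∀ i, ¬w.IsEquiv (v i)) (hvv : Pairwise fun i j ↦ ¬(v i).IsEquiv (v j))
    (c : k) {ε : ℝ} (hε : 0 < ε) {δ : Fin n → ℝ} (hδ : ∀ i, 0 < δ i) :
    ∃ a : k, w (a - c) < ε ∧ ∀ i, v i a < δ i := by
  let u : Option (Fin n) → AbsoluteValue k ℝ := fun o ↦ o.elim w v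
  have hu : Pairwise fun i j ↦ ¬(u i).IsEquiv (u j) := by
    rintro (_ | i) (_ | j) hij
    · exact absurd rfl hij
    · exact hwv j
    · exact fun h ↦ hwv i h.symm
    · exact hvv fun h ↦ hij (congrArg some h)
  obtain ⟨a, ha⟩ := exists_forall_abv_sub_lt (v := u) (by rintro (_ | i) <;> simp [u, hw, hv])
    hu (fun o ↦ o.elim c 0) (ε := fun o ↦ o.elim ε δ) (by rintro (_ | i) <;> simp [hε, hδ])
  exact ⟨a, ha none, fun i ↦ by simpa [u] using ha (some i)⟩

end AbsoluteValue

section Nonarchimedean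

variable {k : Type*} [Field k] {w : AbsoluteValue k ℝ}

theorem IsNonarchimedean.exists_abv_sum_mul_pow_eq_of_lt {ι : Type*} [Fintype ι]
    (hw : IsNonarchimedean w) (c : ι → k) (e : ι → ℕ) {j₀ : ι} (hc : c j₀ ≠ 0)
    (he : ∀ j ≠ j₀, e j < e j₀) :
    ∃ T : ℝ, ∀ y : k, T < w (∑ j, c j * y ^ e j) →
      w (∑ j, c j * y ^ e j) = w (c j₀) * w y ^ e j₀ := by
  classical
  set S := ∑ j, w (c j)
  have hSj (j : ι) : w (c j) ≤ S :=
    Finset.single_le_sum (fun j _ ↦ w.nonneg (c j)) (Finset.mem_univ j)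
  have hc₀ : 0 < w (c j₀) := w.pos hc
  set R := max 1 (S / w (c j₀))
  refine ⟨S * R ^ e j₀, fun y hy ↦ ?_⟩
  have hR : R < w y := by
    by_contra! hyR
    refine hy.not_ge ((w.sum_le _ _).trans ?_)
    rw [Finset.sum_mul]
    refine Finset.sum_le_sum fun j _ ↦ ?_
    rw [map_mul, map_pow]
    refine mul_le_mul_of_nonneg_left ?_ (w.nonneg _)
    calc w y ^ e j ≤ R ^ e j := pow_le_pow_left₀ (w.nonneg y) hyR _
      _ ≤ R ^ e j₀ := pow_le_pow_right₀ (le_max_left _ _) (by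
          rcases eq_or_ne j j₀ with rfl | hj
          · exact le_rfl
          · exact (he j hj).le)
  have hy1 : 1 < w y := (le_max_left _ _).trans_lt hR
  have hSy : S < w (c j₀) * w y := by
    rw [← div_lt_iff₀' hc₀]; exact (le_max_right _ _).trans_lt hR
  have hdom (j : ι) (hj : j ≠ j₀) : w (c j * y ^ e j) < w (c j₀ * y ^ e j₀) := by
    rw [map_mul, map_mul, map_pow, map_pow]
    calc w (c j) * w y ^ e j ≤ S * w y ^ e j :=
          mul_le_mul_of_nonneg_right (hSj j) (by positivity)
      _ < w (c j₀) * w y * w y ^ e j := mul_lt_mul_of_pos_right hSy (by positivity)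
      _ = w (c j₀) * w y ^ (e j + 1) := by ring
      _ ≤ w (c j₀) * w y ^ e j₀ :=
          mul_le_mul_of_nonneg_left (pow_le_pow_right₀ hy1.le (he j hj)) hc₀.le
  rw [hw.apply_sum_eq_of_lt (fun a ↦ (w.map_neg a).symm) (Finset.mem_univ j₀)
    fun j _ ↦ hdom j, map_mul, map_pow]

theorem IsNonarchimedean.abv_sub_eq_of_abv_sub_lt (hw : IsNonarchimedean w) {a b c d : k}
    (ha : w (a - c) < w c) (hb : w (b - d) < w d) (hdc : w d < w c) : w (a - b) = w c := by
  have hwa : w a = w c := by simpa using hw.add_eq_left_of_lt ha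
  have hwb : w b = w d := by simpa using hw.add_eq_left_of_lt hb
  rw [sub_eq_add_neg, hw.add_eq_left_of_lt (by rwa [w.map_neg, hwa, hwb]), hwa]

end Nonarchimedean

section pPolynomial

variable {p : ℕ} [Fact p.Prime] {m : ℕ}

theorem pPolyHom_apply (k : Type) [CommRing k] [CharP k p] (b : Fin m → k) (y : k) :
    pPolyHom k p m b y = y + ∑ j : Fin m, b j * y ^ p ^ (j.1 + 1) := rfl

variable {K : Type} [NormedField K] [CharP K p]

theorem norm_pPolyHom_sub_self_le (B : Fin m → K) {ρ : ℝ} (hρ : ρ ≤ 1) {x : K}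
    (hx : ‖x‖ ≤ ρ) :
    ‖pPolyHom K p m B x - x‖ ≤ (∑ j, ‖B j‖) * ρ * ‖x‖ := by
  have hpow (j : Fin m) : ‖x‖ ^ p ^ (j.1 + 1) ≤ ρ * ‖x‖ := by
    have h2 : 2 ≤ p ^ (j.1 + 1) := Nat.one_lt_pow j.1.succ_ne_zero (Fact.out : p.Prime).one_lt
    calc ‖x‖ ^ p ^ (j.1 + 1) ≤ ‖x‖ ^ 2 :=
          pow_le_pow_of_le_one (norm_nonneg x) (hx.trans hρ) h2
      _ ≤ ρ * ‖x‖ := by rw [sq]; exact mul_le_mul_of_nonneg_right hx (norm_nonneg x)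
  rw [pPolyHom_apply, add_sub_cancel_left, Finset.sum_mul, Finset.sum_mul]
  refine (norm_sum_le _ _).trans (Finset.sum_le_sum fun j _ ↦ ?_)
  rw [norm_mul, norm_pow, mul_assoc]
  exact mul_le_mul_of_nonneg_left (hpow j) (norm_nonneg _)

theorem exists_ball_subset_range_pPolyHom [CompleteSpace K] (B : Fin m → K) :
    ∃ δ > 0, Metric.ball (0 : K) δ ⊆ Set.range (pPolyHom K p m B) := by
  set S := ∑ j, ‖B j‖
  have hS : 0 ≤ S := Finset.sum_nonneg fun j _ ↦ norm_nonneg (B j)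
  set r := (4 * (S + 1))⁻¹
  have hr : 0 < r := by positivity
  have hSr' : (S + 1) * (2 * r) = 1 / 2 := by simp only [r]; field_simp; ring
  have h2r : 2 * r ≤ 1 := by nlinarith
  have hSr : S * (2 * r) ≤ 1 / 2 := by nlinarith
  refine ⟨r / 2, by positivity, fun A hA ↦ ?_⟩
  rw [mem_ball_zero_iff] at hA
  set s := Metric.closedBall (0 : K) r
  set g : K → K := fun y ↦ A + y - pPolyHom K p m B y
  have hlip : ∀ y ∈ s, ∀ y' ∈ s, ‖g y - g y'‖ ≤ 1 / 2 * ‖y - y'‖ := by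
    intro y hy y' hy'
    rw [mem_closedBall_zero_iff] at hy hy'
    have hd : ‖y - y'‖ ≤ 2 * r := (norm_sub_le y y').trans (by linarith)
    have : g y - g y' = -(pPolyHom K p m B (y - y') - (y - y')) := by
      simp only [g, map_sub]; abel
    rw [this, norm_neg]
    exact (norm_pPolyHom_sub_self_le B h2r hd).trans
      (mul_le_mul_of_nonneg_right hSr (norm_nonneg _))
  have hmaps : Set.MapsTo g s s := by
    intro y hy
    have h0 : (0 : K) ∈ s := Metric.mem_closedBall_self hr.le
    have hy0 := hlip y hy 0 h0
    rw [mem_closedBall_zero_iff] at hy ⊢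
    simp only [g, map_zero, add_zero, sub_zero] at hy0
    calc ‖g y‖ ≤ ‖A‖ + ‖g y - A‖ := by simpa using norm_le_insert' (g y) A
      _ ≤ r := by linarith
  have hcontr : ContractingWith (1 / 2) (hmaps.restrict g s s) := by
    refine ⟨by norm_num, LipschitzWith.of_dist_le_mul ?_⟩
    rintro ⟨y, hy⟩ ⟨y', hy'⟩
    simpa [Subtype.dist_eq, dist_eq_norm] using hlip y hy y' hy'
  obtain ⟨y, -, hy, -⟩ := hcontr.exists_fixedPoint' Metric.isClosed_closedBall.isComplete
    hmaps (Metric.mem_closedBall_self hr.le) (edist_ne_top _ _)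
  refine ⟨y, ?_⟩
  have : A + y - pPolyHom K p m B y = y := hy
  linear_combination -this

variable {k : Type} [Field k] [CharP k p] {w : AbsoluteValue k ℝ}

theorem IsNonarchimedean.exists_abv_pPolyHom_eq_of_lt (hw : IsNonarchimedean w) (hm : 0 < m)
    {b : Fin m → k} (hb : b ⟨m - 1, Nat.sub_lt hm Nat.one_pos⟩ ≠ 0) :
    ∃ T : ℝ, ∀ y : k, T < w (pPolyHom k p m b y) →
      w (pPolyHom k p m b y) = w (b ⟨m - 1, Nat.sub_lt hm Nat.one_pos⟩) * w y ^ p ^ m := by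
  have hp := (Fact.out : p.Prime).one_lt
  have hsum (y : k) : pPolyHom k p m b y =
      ∑ j : Option (Fin m), j.elim 1 b * y ^ j.elim 1 (fun i ↦ p ^ (i.1 + 1)) := by
    simp [pPolyHom_apply, Fintype.sum_option]
  have hexp : p ^ ((m - 1) + 1) = p ^ m := by rw [Nat.sub_add_cancel hm]
  obtain ⟨T, hT⟩ := hw.exists_abv_sum_mul_pow_eq_of_lt (fun j ↦ j.elim 1 b)
    (fun j ↦ j.elim 1 fun i ↦ p ^ (i.1 + 1))
    (j₀ := some ⟨m - 1, Nat.sub_lt hm Nat.one_pos⟩) hb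
    (by
      rintro (_ | ⟨i, hi⟩) hne
      · simpa [hexp] using Nat.one_lt_pow hm.ne' hp
      · have : i ≠ m - 1 := fun h ↦ hne (by subst h; rfl)
        simpa [hexp] using Nat.pow_lt_pow_right hp (by omega))
  exact ⟨T, fun y hy ↦ by simpa [hsum, hexp] using hT y (by simpa [hsum] using hy)⟩

end pPolynomial

section ValueGroup

variable {k : Type*} [Field k] {w : AbsoluteValue k ℝ} {p m : ℕ}

theorem abv_mul_mul_pow_ne_mul_pow_pow (hp : p ≠ 0) (hm : 0 < m) {β x u : k} (hβ : β ≠ 0)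
    (hx : x ≠ 0) (hu : u ≠ 0) (hxp : ∀ y : k, y ≠ 0 → w x ≠ w y ^ p) (y : k) :
    w (β * x * u ^ p) ≠ w β * w y ^ p ^ m := by
  intro h
  rcases eq_or_ne y 0 with rfl | hy
  · simp [hβ, hx, hu, hp] at h
  refine hxp (y ^ p ^ (m - 1) / u) (by simp [hy, hu]) ?_
  have hwu : w u ^ p ≠ 0 := pow_ne_zero _ (w.ne_zero hu)
  rw [map_mul, map_mul, map_pow, mul_assoc, mul_right_inj' (w.ne_zero hβ)] at h
  rw [map_div₀, map_pow, div_pow, ← pow_mul, ← pow_succ, Nat.sub_add_cancel hm, ← h,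
    mul_div_cancel_right₀ _ hwu]

theorem exists_seq_abv_strictMono_ne_mul_pow_pow (hp : p ≠ 0) (hm : 0 < m) {β x : k}
    (hβ : β ≠ 0) (hx : x ≠ 0) (hxp : ∀ y : k, y ≠ 0 → w x ≠ w y ^ p)
    (hw : w.IsNontrivial) (T : ℝ) : ∃ c : ℕ → k, StrictMono (fun t ↦ w (c t)) ∧
      ∀ t, c t ≠ 0 ∧ T < w (c t) ∧ ∀ y, w (c t) ≠ w β * w y ^ p ^ m := by
  obtain ⟨z, hz⟩ := hw.exists_abv_gt_one
  have hz0 : z ≠ 0 := w.pos_iff.1 (zero_lt_one.trans hz)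
  have hβx : 0 < w (β * x) := w.pos (mul_ne_zero hβ hx)
  have hzp : 1 < w z ^ p := one_lt_pow₀ hz hp
  obtain ⟨N, hN⟩ := pow_unbounded_of_one_lt (T / w (β * x)) hzp
  have hwc (t : ℕ) : w (β * x * (z ^ (N + t)) ^ p) = w (β * x) * (w z ^ p) ^ (N + t) := by
    simp only [map_mul, map_pow, ← pow_mul, mul_comm _ p]
  have hc : StrictMono fun t ↦ w (β * x * (z ^ (N + t)) ^ p) := fun s t hst ↦ by
    simpa only [hwc] using
      mul_lt_mul_of_pos_left (pow_lt_pow_right₀ hzp (Nat.add_lt_add_left hst N)) hβx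
  refine ⟨fun t ↦ β * x * (z ^ (N + t)) ^ p, hc, fun t ↦ ⟨by simp [hβ, hx, hz0], ?_,
    abv_mul_mul_pow_ne_mul_pow_pow hp hm hβ hx (pow_ne_zero _ hz0) hxp⟩⟩
  refine lt_of_lt_of_le ?_ (hc.monotone t.zero_le)
  rwa [hwc, add_zero, ← div_lt_iff₀' hβx]

end ValueGroup

theorem QuotientAddGroup.infinite_image_mk'_of_sub_notMem {G : Type*} [AddCommGroup G]
    {H : AddSubgroup G} {S : Set G} {a : ℕ → G} (ha : ∀ t, a t ∈ S)
    (hH : ∀ s t, s < t → a t - a s ∉ H) : (QuotientAddGroup.mk' H '' S).Infinite := by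
  refine Set.infinite_of_injective_forall_mem (f := fun t ↦ QuotientAddGroup.mk' H (a t))
    (fun s t hst ↦ ?_) fun t ↦ ⟨a t, ha t, rfl⟩
  have hst' := QuotientAddGroup.eq.1 hst
  by_contra hne
  rcases lt_or_gt_of_ne hne with h | h
  · exact hH s t h (by rwa [sub_eq_neg_add])
  · exact hH t s h (by rwa [← neg_mem_iff, neg_sub, sub_eq_neg_add])

theorem pPolynomial_localization_kernel_infinite_general
    (p : ℕ) [Fact p.Prime] (k : Type) [Field k] [CharP k p]
    (n : ℕ) (v : Fin n → AbsoluteValue k ℝ)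
    (hnt : ∀ i, (v i).IsNontrivial')
    (hpairwise : ∀ i j, i ≠ j → ¬ (v i).IsEquivalent (v j))
    (K : Fin n → Type) [∀ i, NormedField (K i)] [∀ i, CompleteSpace (K i)]
    (emb : ∀ i, k →+* K i)
    (hisom : ∀ i, ∀ x : k, ‖emb i x‖ = v i x)
    (m : ℕ) (hm : 0 < m) (b : Fin m → k)
    (hbm : b ⟨m - 1, Nat.sub_lt hm Nat.one_pos⟩ ≠ 0)
    (w : AbsoluteValue k ℝ) (hwna : w.IsNonarch) (hwnt : w.IsNontrivial')
    (hwv : ∀ i, ¬ w.IsEquivalent (v i))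
    (hwnondiv : ∃ x : k, x ≠ 0 ∧ ∀ y : k, y ≠ 0 → w x ≠ w y ^ p) :
    Set.Infinite
      ((QuotientAddGroup.mk' (pPolyHom k p m b).range) ''
        {a : k | ∀ i, ∃ y : K i,
          emb i a = y + ∑ j : Fin m, emb i (b j) * y ^ p ^ (j.1 + 1)}) := by
  have hp : p ≠ 0 := (Fact.out : p.Prime).ne_zero
  have (i : Fin n) : CharP (K i) p := charP_of_injective_ringHom (emb i).injective p
  choose δ hδ hball using fun i ↦ exists_ball_subset_range_pPolyHom (p := p) (emb i ∘ b)
  obtain ⟨T, hT⟩ := IsNonarchimedean.exists_abv_pPolyHom_eq_of_lt (p := p) hwna hm hbm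
  obtain ⟨x, hx, hxp⟩ := hwnondiv
  obtain ⟨c, hc, hc_ne⟩ := exists_seq_abv_strictMono_ne_mul_pow_pow hp hm hbm hx hxp hwnt T
  choose a hac hav using fun t ↦ AbsoluteValue.exists_abv_sub_lt_and_forall_abv_lt hwnt hnt
    (fun i h ↦ hwv i (AbsoluteValue.isEquivalent_iff_isEquiv.2 h))
    (fun i j hij h ↦ hpairwise i j hij (AbsoluteValue.isEquivalent_iff_isEquiv.2 h))
    (c t) (w.pos (hc_ne t).1) hδ
  refine QuotientAddGroup.infinite_image_mk'_of_sub_notMem (a := a) (fun t i ↦ ?_)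
    fun s t hst ⟨y, hy⟩ ↦ ?_
  · obtain ⟨y, hy⟩ := hball i (show emb i (a t) ∈ _ by
      rw [mem_ball_zero_iff, hisom]; exact hav t i)
    exact ⟨y, hy.symm⟩
  · obtain ⟨-, hTc, hne⟩ := hc_ne t
    have hval : w (pPolyHom k p m b y) = w (c t) :=
      hy ▸ IsNonarchimedean.abv_sub_eq_of_abv_sub_lt hwna (hac t) (hac s) (hc hst)
    exact hne y (hval ▸ hT y (hval ▸ hTc))

/-- Let `k` be a field of characteristic `p > 0`, let `v 1, …, v n` be finitely many
pairwise inequivalent nontrivial rank-1 valuations of `k` with completions `K i`, and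
let `f(T) = T + b 1 * T^p + ⋯ + b m * T^(p^m)` be a `p`-polynomial over `k` with
`m ≥ 1` and `b m ≠ 0`.  If `k` carries a further nontrivial rank-1 valuation `w`,
inequivalent to all the `v i`, whose value group is not `p`-divisible, then the kernel
of the canonical map `k/f(k) → ∏ i, K i / f(K i)` is infinite: the image in `k/f(k)` of
`{a : k | a ∈ f(K i) for all i}` is an infinite set. -/
theorem pPolynomial_localization_kernel_infinite
    (p : ℕ) [Fact p.Prime] (k : Type) [Field k] [CharP k p]
    (n : ℕ) (v : Fin n → AbsoluteValue k ℝ)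
    (hna : ∀ i, (v i).IsNonarch) (hnt : ∀ i, (v i).IsNontrivial')
    (hpairwise : ∀ i j, i ≠ j → ¬ (v i).IsEquivalent (v j))
    (K : Fin n → Type) [∀ i, NormedField (K i)] [∀ i, CompleteSpace (K i)]
    (emb : ∀ i, k →+* K i)
    (hisom : ∀ i, ∀ x : k, ‖emb i x‖ = v i x)
    (hdense : ∀ i, DenseRange (emb i))
    (m : ℕ) (hm : 0 < m) (b : Fin m → k)
    (hbm : b ⟨m - 1, Nat.sub_lt hm Nat.one_pos⟩ ≠ 0)
    (w : AbsoluteValue k ℝ) (hwna : w.IsNonarch) (hwnt : w.IsNontrivial')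
    (hwv : ∀ i, ¬ w.IsEquivalent (v i))
    (hwnondiv : ∃ x : k, x ≠ 0 ∧ ∀ y : k, y ≠ 0 → w x ≠ w y ^ p) :
    Set.Infinite
      ((QuotientAddGroup.mk' (pPolyHom k p m b).range) ''
        {a : k | ∀ i, ∃ y : K i,
          emb i a = y + ∑ j : Fin m, emb i (b j) * y ^ p ^ (j.1 + 1)}) :=
  pPolynomial_localization_kernel_infinite_general p k n v hnt hpairwise K emb hisom m hm b hbm w
    hwna hwnt hwv hwnondiv
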